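/- Let 0 < a < b, 2 < μ < 3, let G be the Green's function from the Hadamard fractional boundary value problem, and let h : [a,b] → ℝ be continuous and nonnegative. Define (Tx)(t) = ∫_a^b G(t,τ)·h(τ)·(1/τ) dτ. Then for all t, s ∈ [a,b], (Th)(t) ≥ w(t)·(Th)(s), where w(t) = (ln(t/a))^(μ-1)·(ln(b/t))/(ln(b/a))^μ; consequently (Th)(t) ≥ w(t)·sup_{s ∈ [a,b]}(Th)(s), i.e., Th lies in the cone P = { x ∈ C[a,b] : x(t) ≥ w(t)·‖x‖ }. -/

import Mathlib

/-!
In the variables `u = log (t / a)`, `v = log (τ / a)`, `z = log (s / a)`, `L = log (b / a)` and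
`p = μ - 1 ∈ (1, 2)`, the quantity `Γ(μ) L ^ p G(t, τ)` becomes
`K(u, v) = u ^ p (L - v) ^ p - [v ≤ u] (u - v) ^ p L ^ p`
and `w(t) = u ^ p (L - u) / L ^ (p + 1)`.
With `m(v) = (L - v) ^ (p - 1) min(v, L - v)` one has the two-sided estimate
`u ^ p (L - u) m(v) ≤ L K(u, v)` and `K(z, v) ≤ L ^ p m(v)`, which combine to
`w(t) G(s, τ) ≤ G(t, τ)`; integrating against `h(τ) / τ ≥ 0` gives the claim.
For `v ≤ u` both estimates come from `K = A ^ p - B ^ p` with `A = u (L - v)`, `B = (u - v) L`,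
`A - B = v (L - u)`, and `A ^ (p - 1) (A - B) ≤ A ^ p - B ^ p ≤ p A ^ (p - 1) (A - B)`;
the upper one also needs `p z ^ (p - 1) (L - z) ≤ L ^ p`, which is where `p ≤ 2` enters.
-/

noncomputable def G (a b μ : ℝ) (t τ : ℝ) : ℝ :=
  if τ ≤ t then
    (1 / (Real.Gamma μ * Real.log (b / a) ^ (μ - 1))) *
      (Real.log (t / a) ^ (μ - 1) * Real.log (b / τ) ^ (μ - 1) -
        Real.log (t / τ) ^ (μ - 1) * Real.log (b / a) ^ (μ - 1))
  else
    (1 / (Real.Gamma μ * Real.log (b / a) ^ (μ - 1))) *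
      (Real.log (t / a) ^ (μ - 1) * Real.log (b / τ) ^ (μ - 1))

open Real Set MeasureTheory
open scoped Pointwise

section RpowDifference

variable {A B p : ℝ}

lemma rpow_eq_rpow_sub_one_mul (hA : 0 ≤ A) (hp : p ≠ 0) : A ^ p = A ^ (p - 1) * A := by
  simpa using rpow_add_one' hA (y := p - 1) (by simpa using hp)

lemma rpow_sub_one_mul_sub_le_rpow_sub_rpow (hB : 0 ≤ B) (hBA : B ≤ A) (hp : 1 ≤ p) :
    A ^ (p - 1) * (A - B) ≤ A ^ p - B ^ p := by
  rw [rpow_eq_rpow_sub_one_mul (p := p) (hB.trans hBA) (by linarith),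
    rpow_eq_rpow_sub_one_mul (p := p) hB (by linarith)]
  have := mul_le_mul_of_nonneg_right (rpow_le_rpow hB hBA (by linarith : 0 ≤ p - 1)) hB
  linarith

lemma rpow_sub_rpow_le_mul_rpow_sub_one_mul_sub (hB : 0 ≤ B) (hBA : B ≤ A) (hp : 1 ≤ p) :
    A ^ p - B ^ p ≤ p * A ^ (p - 1) * (A - B) := by
  rcases (hB.trans hBA).eq_or_lt with rfl | hA
  · obtain rfl : B = 0 := le_antisymm hBA hB
    simp
  have hbern : 1 + p * (B / A - 1) ≤ (B / A) ^ p := by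
    simpa using one_add_mul_self_le_rpow_one_add (s := B / A - 1)
      (by linarith [div_nonneg hB hA.le]) hp
  rw [div_rpow hB hA.le, le_div_iff₀ (rpow_pos_of_pos hA p)] at hbern
  have : (1 + p * (B / A - 1)) * A ^ p = A ^ p - p * A ^ (p - 1) * (A - B) := by
    rw [rpow_eq_rpow_sub_one_mul hA.le (by linarith)]
    field_simp
    ring
  linarith

end RpowDifference

section PowerProfile

variable {p L s z : ℝ}

lemma mul_rpow_sub_one_mul_one_sub_le_one (hs0 : 0 ≤ s) (hs1 : s ≤ 1) (hp1 : 1 ≤ p)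
    (hp2 : p ≤ 2) :
    p * s ^ (p - 1) * (1 - s) ≤ 1 := by
  -- concavity of `s ^ (p - 1)` reduces the claim to a polynomial inequality
  have hbern : s ^ (p - 1) ≤ 1 + (p - 1) * (s - 1) := by
    simpa using rpow_one_add_le_one_add_mul_self (s := s - 1) (by linarith)
      (by linarith : 0 ≤ p - 1) (by linarith)
  have hpoly : p * (1 + (p - 1) * (s - 1)) * (1 - s) ≤ 1 := by
    nlinarith [sq_nonneg (2 * (p - 1) * (1 - s) - 1), mul_nonneg hs0 (sub_nonneg.2 hs1),
      mul_nonneg (sub_nonneg.2 hp1) (sub_nonneg.2 hp2), mul_nonneg (sub_nonneg.2 hp1) hs0]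
  calc p * s ^ (p - 1) * (1 - s) ≤ p * (1 + (p - 1) * (s - 1)) * (1 - s) := by gcongr
    _ ≤ 1 := hpoly

lemma mul_rpow_sub_one_mul_sub_le_rpow (hz0 : 0 ≤ z) (hzL : z ≤ L) (hp1 : 1 ≤ p)
    (hp2 : p ≤ 2) :
    p * z ^ (p - 1) * (L - z) ≤ L ^ p := by
  rcases (hz0.trans hzL).eq_or_lt with rfl | hL
  · obtain rfl : z = 0 := le_antisymm hzL hz0
    simp [rpow_nonneg]
  have hs := mul_rpow_sub_one_mul_one_sub_le_one (div_nonneg hz0 hL.le) ((div_le_one hL).2 hzL)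
    hp1 hp2
  calc p * z ^ (p - 1) * (L - z) = L ^ p * (p * (z / L) ^ (p - 1) * (1 - z / L)) := by
        rw [div_rpow hz0 hL.le, rpow_eq_rpow_sub_one_mul hL.le (by linarith)]
        field_simp
    _ ≤ L ^ p := mul_le_of_le_one_right (by positivity) hs

end PowerProfile

noncomputable def greenKernel (p L u v : ℝ) : ℝ :=
  if v ≤ u then u ^ p * (L - v) ^ p - (u - v) ^ p * L ^ p else u ^ p * (L - v) ^ p

section GreenKernel

variable {p L u v z : ℝ}

lemma greenKernel_le_rpow_mul_rpow (hL : 0 ≤ L) :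
    greenKernel p L z v ≤ z ^ p * (L - v) ^ p := by
  unfold greenKernel
  split_ifs with hvz
  · have : 0 ≤ (z - v) ^ p * L ^ p :=
      mul_nonneg (rpow_nonneg (by linarith) p) (rpow_nonneg hL p)
    linarith
  · rfl

lemma greenKernel_le_rpow_mul_rpow_sub_one_mul (hv0 : 0 ≤ v) (hvL : v ≤ L) (hz0 : 0 ≤ z)
    (hzL : z ≤ L) (hp1 : 1 ≤ p) (hp2 : p ≤ 2) :
    greenKernel p L z v ≤ L ^ p * ((L - v) ^ (p - 1) * v) := by
  have hL : 0 ≤ L := hv0.trans hvL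
  have hLv : 0 ≤ L - v := by linarith
  by_cases hvz : v ≤ z
  · have hmvt := rpow_sub_rpow_le_mul_rpow_sub_one_mul_sub (A := z * (L - v))
      (B := (z - v) * L) (mul_nonneg (by linarith) hL) (by nlinarith) hp1
    rw [mul_rpow hz0 hLv, mul_rpow hz0 hLv, mul_rpow (sub_nonneg.2 hvz) hL] at hmvt
    calc greenKernel p L z v
        ≤ p * z ^ (p - 1) * (L - z) * ((L - v) ^ (p - 1) * v) := by
          rw [greenKernel, if_pos hvz]; linarith
      _ ≤ L ^ p * ((L - v) ^ (p - 1) * v) := by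
          gcongr; exact mul_rpow_sub_one_mul_sub_le_rpow hz0 hzL hp1 hp2
  · have hv_prof : v ^ (p - 1) * (L - v) ≤ L ^ p := by
      have := mul_rpow_sub_one_mul_sub_le_rpow hv0 hvL hp1 hp2
      have : 0 ≤ v ^ (p - 1) * (L - v) := mul_nonneg (rpow_nonneg hv0 _) hLv
      nlinarith
    calc greenKernel p L z v = z ^ p * (L - v) ^ p := by rw [greenKernel, if_neg hvz]
      _ ≤ v ^ p * (L - v) ^ p := by gcongr; linarith
      _ = v ^ (p - 1) * (L - v) * ((L - v) ^ (p - 1) * v) := by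
          rw [rpow_eq_rpow_sub_one_mul hv0 (by linarith),
            rpow_eq_rpow_sub_one_mul (p := p) hLv (by linarith)]
          ring
      _ ≤ L ^ p * ((L - v) ^ (p - 1) * v) := by gcongr

lemma greenKernel_le (hv0 : 0 ≤ v) (hvL : v ≤ L) (hz0 : 0 ≤ z) (hzL : z ≤ L) (hp1 : 1 ≤ p)
    (hp2 : p ≤ 2) : greenKernel p L z v ≤ L ^ p * ((L - v) ^ (p - 1) * min v (L - v)) := by
  have hL : 0 ≤ L := hv0.trans hvL
  have hLv : 0 ≤ L - v := by linarith
  rw [mul_min_of_nonneg _ _ (rpow_nonneg hLv _), mul_min_of_nonneg _ _ (rpow_nonneg hL _)]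
  refine le_min (greenKernel_le_rpow_mul_rpow_sub_one_mul hv0 hvL hz0 hzL hp1 hp2) ?_
  calc greenKernel p L z v ≤ z ^ p * (L - v) ^ p := greenKernel_le_rpow_mul_rpow hL
    _ ≤ L ^ p * (L - v) ^ p := by gcongr
    _ = L ^ p * ((L - v) ^ (p - 1) * (L - v)) := by
        rw [← rpow_eq_rpow_sub_one_mul hLv (by linarith)]

lemma le_greenKernel (hu0 : 0 ≤ u) (huL : u ≤ L) (hv0 : 0 ≤ v) (hvL : v ≤ L)
    (hp : 1 ≤ p) :
    u ^ p * (L - u) * ((L - v) ^ (p - 1) * min v (L - v)) ≤ L * greenKernel p L u v := by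
  have hL : 0 ≤ L := hu0.trans huL
  have hLv : 0 ≤ L - v := by linarith
  unfold greenKernel
  split_ifs with hvu
  · have hlow := rpow_sub_one_mul_sub_le_rpow_sub_rpow (A := u * (L - v)) (B := (u - v) * L)
      (mul_nonneg (by linarith) (by linarith)) (by nlinarith) hp
    rw [mul_rpow hu0 hLv, mul_rpow hu0 hLv, mul_rpow (sub_nonneg.2 hvu) hL] at hlow
    calc u ^ p * (L - u) * ((L - v) ^ (p - 1) * min v (L - v))
        ≤ u ^ p * (L - u) * ((L - v) ^ (p - 1) * v) := by gcongr; exact min_le_left _ _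
      _ = u * (u ^ (p - 1) * (L - v) ^ (p - 1) * (u * (L - v) - (u - v) * L)) := by
          rw [rpow_eq_rpow_sub_one_mul (p := p) hu0 (by linarith)]
          ring
      _ ≤ L * (u ^ p * (L - v) ^ p - (u - v) ^ p * L ^ p) := by
          gcongr
          exact mul_nonneg (mul_nonneg (rpow_nonneg hu0 _) (rpow_nonneg hLv _)) (by nlinarith)
  · calc u ^ p * (L - u) * ((L - v) ^ (p - 1) * min v (L - v))
        ≤ u ^ p * (L - u) * ((L - v) ^ (p - 1) * (L - v)) := by gcongr; exact min_le_right _ _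
      _ = (L - u) * (u ^ p * (L - v) ^ p) := by
          rw [rpow_eq_rpow_sub_one_mul (p := p) hLv (by linarith)]
          ring
      _ ≤ L * (u ^ p * (L - v) ^ p) := by gcongr; linarith

lemma greenKernel_nonneg (hu0 : 0 ≤ u) (huL : u ≤ L) (hv0 : 0 ≤ v) (hvL : v ≤ L)
    (hL : 0 < L) (hp : 1 ≤ p) : 0 ≤ greenKernel p L u v :=
  nonneg_of_mul_nonneg_right
    ((by positivity : (0 : ℝ) ≤ _).trans (le_greenKernel hu0 huL hv0 hvL hp)) hL

lemma mul_greenKernel_le (hu0 : 0 ≤ u) (huL : u ≤ L) (hv0 : 0 ≤ v) (hvL : v ≤ L)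
    (hz0 : 0 ≤ z) (hzL : z ≤ L) (hp1 : 1 ≤ p) (hp2 : p ≤ 2) :
    u ^ p * (L - u) * greenKernel p L z v ≤ L ^ (p + 1) * greenKernel p L u v := by
  have hL : 0 ≤ L := hu0.trans huL
  calc u ^ p * (L - u) * greenKernel p L z v
      ≤ u ^ p * (L - u) * (L ^ p * ((L - v) ^ (p - 1) * min v (L - v))) := by
        have : 0 ≤ L - u := by linarith
        gcongr
        exact greenKernel_le hv0 hvL hz0 hzL hp1 hp2
    _ = L ^ p * (u ^ p * (L - u) * ((L - v) ^ (p - 1) * min v (L - v))) := by ring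
    _ ≤ L ^ p * (L * greenKernel p L u v) :=
        mul_le_mul_of_nonneg_left (le_greenKernel hu0 huL hv0 hvL hp1) (rpow_nonneg hL _)
    _ = L ^ (p + 1) * greenKernel p L u v := by rw [rpow_add_one' hL (by linarith)]; ring

end GreenKernel

section Green

variable {a b μ t s τ x y : ℝ}

lemma log_div_mem_Icc (ha : 0 < a) (ht : t ∈ Icc a b) : log (t / a) ∈ Icc 0 (log (b / a)) :=
  ⟨log_nonneg ((one_le_div ha).2 ht.1),
    log_le_log (div_pos (ha.trans_le ht.1) ha) (div_le_div_of_nonneg_right ht.2 ha.le)⟩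

lemma log_div_eq_sub (ha : 0 < a) (hx : 0 < x) (hy : 0 < y) :
    log (x / y) = log (x / a) - log (y / a) := by
  rw [log_div hx.ne' hy.ne', log_div hx.ne' ha.ne', log_div hy.ne' ha.ne']
  ring

lemma G_eq_greenKernel (ha : 0 < a) (hb : 0 < b) (ht : 0 < t) (hτ : 0 < τ) :
    G a b μ t τ = greenKernel (μ - 1) (log (b / a)) (log (t / a)) (log (τ / a)) /
      (Gamma μ * log (b / a) ^ (μ - 1)) := by
  have hle : τ ≤ t ↔ log (τ / a) ≤ log (t / a) := by
    rw [log_le_log_iff (div_pos hτ ha) (div_pos ht ha), div_le_div_iff_of_pos_right ha]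
  simp only [G, greenKernel, hle, log_div_eq_sub ha hb hτ, log_div_eq_sub ha ht hτ]
  split_ifs <;> ring

lemma G_nonneg (ha : 0 < a) (hab : a < b) (hμ : 2 ≤ μ) (ht : t ∈ Icc a b)
    (hτ : τ ∈ Icc a b) :
    0 ≤ G a b μ t τ := by
  have hL : 0 < log (b / a) := log_pos ((one_lt_div ha).2 hab)
  have hu := log_div_mem_Icc ha ht
  have hv := log_div_mem_Icc ha hτ
  rw [G_eq_greenKernel ha (ha.trans hab) (ha.trans_le ht.1) (ha.trans_le hτ.1)]
  have := Gamma_pos_of_pos (by linarith : 0 < μ)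
  exact div_nonneg (greenKernel_nonneg hu.1 hu.2 hv.1 hv.2 hL (by linarith)) (by positivity)

lemma weight_mul_G_le (ha : 0 < a) (hab : a < b) (hμ2 : 2 ≤ μ) (hμ3 : μ ≤ 3)
    (ht : t ∈ Icc a b) (hs : s ∈ Icc a b) (hτ : τ ∈ Icc a b) :
    log (t / a) ^ (μ - 1) * log (b / t) / log (b / a) ^ μ * G a b μ s τ ≤ G a b μ t τ := by
  have hb := ha.trans hab
  have ht0 := ha.trans_le ht.1
  have hL : 0 < log (b / a) := log_pos ((one_lt_div ha).2 hab)
  have hu := log_div_mem_Icc ha ht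
  have hz := log_div_mem_Icc ha hs
  have hv := log_div_mem_Icc ha hτ
  have hc : 0 < Gamma μ * log (b / a) ^ (μ - 1) :=
    mul_pos (Gamma_pos_of_pos (by linarith)) (rpow_pos_of_pos hL _)
  have key := mul_greenKernel_le hu.1 hu.2 hv.1 hv.2 hz.1 hz.2
    (by linarith : 1 ≤ μ - 1) (by linarith)
  rw [sub_add_cancel] at key
  rw [G_eq_greenKernel ha hb (ha.trans_le hs.1) (ha.trans_le hτ.1),
    G_eq_greenKernel ha hb ht0 (ha.trans_le hτ.1), log_div_eq_sub ha hb ht0]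
  calc _ = log (t / a) ^ (μ - 1) * (log (b / a) - log (t / a)) *
        greenKernel (μ - 1) (log (b / a)) (log (s / a)) (log (τ / a)) / log (b / a) ^ μ /
          (Gamma μ * log (b / a) ^ (μ - 1)) := by ring
    _ ≤ log (b / a) ^ μ * greenKernel (μ - 1) (log (b / a)) (log (t / a)) (log (τ / a)) /
          log (b / a) ^ μ / (Gamma μ * log (b / a) ^ (μ - 1)) := by gcongr
    _ = _ := by rw [mul_div_cancel_left₀ _ (rpow_pos_of_pos hL μ).ne']

lemma G_eq_max (ht : 0 < t) (hτ : 0 < τ) (hμ : 1 < μ) :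
    G a b μ t τ = 1 / (Gamma μ * log (b / a) ^ (μ - 1)) *
      (log (t / a) ^ (μ - 1) * log (b / τ) ^ (μ - 1) -
        max (log (t / τ)) 0 ^ (μ - 1) * log (b / a) ^ (μ - 1)) := by
  unfold G
  split_ifs with hτt
  · rw [max_eq_left (log_nonneg ((one_le_div hτ).2 hτt))]
  · rw [max_eq_right (log_nonpos (by positivity) ((div_le_one hτ).2 (not_le.1 hτt).le)),
      zero_rpow (by linarith), zero_mul, sub_zero]

lemma continuousOn_G (hb : 0 < b) (ht : 0 < t) (hμ : 1 < μ) :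
    ContinuousOn (G a b μ t) (Ioi 0) := by
  have hpow : Continuous fun x : ℝ => x ^ (μ - 1) := continuous_rpow_const (by linarith)
  have hlog : ∀ c ≠ 0, ContinuousOn (fun τ : ℝ => log (c / τ)) (Ioi 0) := fun c hc =>
    (continuousOn_const.div continuousOn_id fun τ hτ => ne_of_gt hτ).log
      fun τ hτ => div_ne_zero hc (ne_of_gt hτ)
  refine ContinuousOn.congr ?_ fun τ hτ => G_eq_max ht hτ hμ
  exact continuousOn_const.mul
    ((continuousOn_const.mul (hpow.comp_continuousOn (hlog b hb.ne'))).sub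
      ((hpow.comp_continuousOn ((hlog t ht.ne').sup continuousOn_const)).mul continuousOn_const))

end Green

lemma intervalIntegrable_G_mul_div {a b μ t : ℝ} {h : ℝ → ℝ} (ha : 0 < a) (hab : a ≤ b)
    (ht : 0 < t) (hμ : 1 < μ) (hc : ContinuousOn h (Icc a b)) :
    IntervalIntegrable (fun τ => G a b μ t τ * h τ / τ) volume a b := by
  have hpos : Icc a b ⊆ Ioi 0 := fun τ hτ => ha.trans_le hτ.1
  refine ContinuousOn.intervalIntegrable ?_
  rw [uIcc_of_le hab]
  exact (((continuousOn_G (ha.trans_le hab) ht hμ).mono hpos).mul hc).div continuousOn_id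
    fun τ hτ => ne_of_gt (hpos hτ)

theorem stmt_13 (a b μ : ℝ) (ha : 0 < a) (hab : a < b) (hμ2 : 2 < μ) (hμ3 : μ < 3)
    (h : ℝ → ℝ) (hc : ContinuousOn h (Set.Icc a b)) (hpos : ∀ τ ∈ Set.Icc a b, 0 ≤ h τ)
    (Th : ℝ → ℝ) (hTh : Th = fun t => ∫ τ in a..b, G a b μ t τ * h τ / τ)
    (w : ℝ → ℝ)
    (hw : w = fun t => Real.log (t / a) ^ (μ - 1) * Real.log (b / t) / Real.log (b / a) ^ μ) :
    (∀ t ∈ Set.Icc a b, ∀ s ∈ Set.Icc a b, w t * Th s ≤ Th t) ∧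
      ∀ t ∈ Set.Icc a b, w t * sSup (Th '' Set.Icc a b) ≤ Th t := by
  have hint : ∀ t ∈ Icc a b,
      IntervalIntegrable (fun τ => G a b μ t τ * h τ / τ) volume a b :=
    fun t ht => intervalIntegrable_G_mul_div ha hab.le (ha.trans_le ht.1) (by linarith) hc
  have hw_nonneg : ∀ t ∈ Icc a b, 0 ≤ w t := fun t ht => by
    have hu := log_div_mem_Icc ha ht
    simp only [hw, log_div_eq_sub ha (ha.trans hab) (ha.trans_le ht.1)]
    exact div_nonneg (mul_nonneg (rpow_nonneg hu.1 _) (sub_nonneg.2 hu.2))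
      (rpow_nonneg (hu.1.trans hu.2) _)
  have hmono : ∀ t ∈ Icc a b, ∀ s ∈ Icc a b, w t * Th s ≤ Th t := by
    intro t ht s hs
    subst hTh
    rw [← intervalIntegral.integral_const_mul]
    refine intervalIntegral.integral_mono_on hab.le ((hint s hs).const_mul _) (hint t ht)
      fun τ hτ => ?_
    have hτ0 := ha.trans_le hτ.1
    rw [mul_div_assoc, mul_div_assoc, ← mul_assoc]
    gcongr
    · exact div_nonneg (hpos τ hτ) hτ0.le
    · subst hw
      exact weight_mul_G_le ha hab hμ2.le hμ3.le ht hs hτ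
  refine ⟨hmono, fun t ht => ?_⟩
  have hTh_nonneg : 0 ≤ Th t := by
    subst hTh
    exact intervalIntegral.integral_nonneg hab.le fun τ hτ =>
      div_nonneg (mul_nonneg (G_nonneg ha hab hμ2.le ht hτ) (hpos τ hτ)) (ha.trans_le hτ.1).le
  rw [← smul_eq_mul, ← Real.sSup_smul_of_nonneg (hw_nonneg t ht)]
  refine Real.sSup_le ?_ hTh_nonneg
  rintro _ ⟨_, ⟨s, hs, rfl⟩, rfl⟩
  exact hmono t ht s hs
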